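/- Let G be a connected graph on n ≥ 2 vertices and define f(X) = 3^{n−2} − Σ_{C ∈ 𝒞*(X)} 3^{|C|−2}, where 𝒞*(X) is the set of connected components of G − X of size at least 2. Then f is submodular: for all X, Y ⊆ V, f(X ∪ Y) + f(X ∩ Y) ≤ f(X) + f(Y). -/

import Mathlib

attribute [local instance] Classical.propDecidable

/-- `C` is the vertex set of a connected component of `G − X`. -/
def IsCompOf {V : Type*} (G : SimpleGraph V) (X C : Finset V) : Prop :=
  C.Nonempty ∧ Disjoint C X ∧ (G.induce (C : Set V)).Connected ∧
    ∀ a ∈ C, ∀ b : V, b ∉ X → G.Adj a b → b ∈ C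

/-- The Devadoss rank function `f(X) = 3^{n-2} - Σ_{C ∈ 𝒞*(X)} 3^{|C|-2}`. -/
noncomputable def devf {V : Type*} [Fintype V] (G : SimpleGraph V) (X : Finset V) : ℝ :=
  3 ^ (Fintype.card V - 2) -
    ∑ C ∈ Finset.univ.filter (fun C : Finset V => IsCompOf G X C ∧ 2 ≤ C.card),
      (3 : ℝ) ^ (C.card - 2)

/-!
Write `g(X) = ∑_{C ∈ 𝒞*(X)} 3^{|C|-2}`, so that `f = 3^{n-2} - g` and it suffices that `g` is
supermodular. On finite sets this follows from the local inequality
`g(X+u) + g(X+v) ≤ g(X+u+v) + g(X)` for distinct `u, v ∉ X`, which can be checked inside each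
component `C` of `G − X` separately. Only a component containing both `u` and `v` needs thought:
the components of `G − X − u` inside `C` other than the one `U ∋ v`, and those of `G − X − v`
other than the one `W ∋ u`, are distinct components of `G − X − u − v`, and `U, W ⊊ C` with
`3^{a-2} + 3^{b-2} ≤ 3^{c-2}` whenever `a, b < c`.
-/

namespace Finset

variable {α : Type*} [DecidableEq α]

lemma insert_sub_le_insert_sub {f : Finset α → ℝ}
    (hf : ∀ X u v, u ≠ v → u ∉ X → v ∉ X →
      f (insert u X) + f (insert v X) ≤ f (insert u (insert v X)) + f X)
    {B A : Finset α} (hBA : B ⊆ A) {v : α} (hvA : v ∉ A) :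
    f (insert v B) - f B ≤ f (insert v A) - f A := by
  suffices h : ∀ S : Finset α, v ∉ B ∪ S →
      f (insert v B) - f B ≤ f (insert v (B ∪ S)) - f (B ∪ S) by
    simpa [union_sdiff_of_subset hBA] using h (A \ B) (by rwa [union_sdiff_of_subset hBA])
  intro S
  induction S using Finset.induction_on with
  | empty => simp
  | insert u S _ ih =>
    rw [union_insert]
    intro hv
    by_cases hu : u ∈ B ∪ S
    · rw [insert_eq_of_mem hu] at hv ⊢
      exact ih hv
    · have hvS : v ∉ B ∪ S := fun h => hv (mem_insert_of_mem h)
      have hvu : v ≠ u := fun h => hv (h ▸ mem_insert_self v _)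
      linarith [ih hvS, hf (B ∪ S) v u hvu hvS hu]

theorem supermodular_of_insert {f : Finset α → ℝ}
    (hf : ∀ X u v, u ≠ v → u ∉ X → v ∉ X →
      f (insert u X) + f (insert v X) ≤ f (insert u (insert v X)) + f X)
    (X Y : Finset α) : f X + f Y ≤ f (X ∪ Y) + f (X ∩ Y) := by
  suffices h : ∀ T : Finset α, Disjoint T X → f X + f (X ∩ Y ∪ T) ≤ f (X ∪ T) + f (X ∩ Y) by
    have hY : X ∩ Y ∪ Y \ X = Y := by rw [inter_comm]; exact sup_inf_sdiff Y X
    simpa [hY] using h (Y \ X) sdiff_disjoint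
  intro T
  induction T using Finset.induction_on with
  | empty => simp
  | insert v T hvT ih =>
    intro hdisj
    rw [disjoint_insert_left] at hdisj
    have hvXT : v ∉ X ∪ T := by simp [hvT, hdisj.1]
    have hinc := insert_sub_le_insert_sub hf
      (union_subset_union (inter_subset_left (s₂ := Y)) subset_rfl) hvXT
    rw [union_insert, union_insert]
    linarith [ih hdisj.2]

end Finset

section

variable {V : Type*} {G : SimpleGraph V}

namespace IsCompOf

variable {X C : Finset V}

lemma nonempty (hC : IsCompOf G X C) : C.Nonempty := hC.1

lemma disjoint (hC : IsCompOf G X C) : Disjoint C X := hC.2.1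

lemma connected (hC : IsCompOf G X C) : (G.induce (C : Set V)).Connected := hC.2.2.1

lemma mem_of_adj (hC : IsCompOf G X C) {a b : V} (ha : a ∈ C) (hb : b ∉ X) (hab : G.Adj a b) :
    b ∈ C :=
  hC.2.2.2 a ha b hb hab

lemma notMem_of_mem (hC : IsCompOf G X C) {a : V} (ha : a ∈ X) : a ∉ C :=
  fun h => Finset.disjoint_left.1 hC.disjoint h ha

lemma subset_of_connected (hC : IsCompOf G X C) {Z : Finset V} (hZX : Disjoint Z X)
    (hZ : (G.induce (Z : Set V)).Connected) {z : V} (hzZ : z ∈ Z) (hzC : z ∈ C) : Z ⊆ C := by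
  suffices ∀ y : (Z : Set V), Relation.ReflTransGen (G.induce Z).Adj ⟨z, hzZ⟩ y → ↑y ∈ C from
    fun a ha => this ⟨a, ha⟩ <|
      (SimpleGraph.reachable_iff_reflTransGen _ _).1 (hZ.preconnected _ _)
  intro y hy
  induction hy with
  | refl => exact hzC
  | tail _ hadj ih => exact hC.mem_of_adj ih (Finset.disjoint_left.1 hZX (by simp)) hadj

lemma eq_of_mem {D : Finset V} (hC : IsCompOf G X C) (hD : IsCompOf G X D) {z : V}
    (hzC : z ∈ C) (hzD : z ∈ D) : C = D :=
  (hD.subset_of_connected hC.disjoint hC.connected hzC hzD).antisymm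
    (hC.subset_of_connected hD.disjoint hD.connected hzD hzC)

lemma insert_of_notMem (hC : IsCompOf G X C) {v : V} (hvC : v ∉ C) : IsCompOf G (insert v X) C :=
  ⟨hC.nonempty, Finset.disjoint_insert_right.2 ⟨hvC, hC.disjoint⟩, hC.connected,
    fun _ ha _ hb hab => hC.mem_of_adj ha (fun h => hb (Finset.mem_insert_of_mem h)) hab⟩

end IsCompOf

lemma exists_isCompOf_mem [Fintype V] (G : SimpleGraph V) {X : Finset V} {v : V} (hv : v ∉ X) :
    ∃ C, IsCompOf G X C ∧ v ∈ C := by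
  set 𝒮 := Finset.univ.filter
    (fun C : Finset V => v ∈ C ∧ Disjoint C X ∧ (G.induce (C : Set V)).Connected)
  have hv𝒮 : {v} ∈ 𝒮 := by
    simp only [𝒮, Finset.mem_filter, Finset.mem_univ, Finset.mem_singleton, true_and,
      Finset.disjoint_singleton_left]
    exact ⟨hv, by rw [Finset.coe_singleton]; simp⟩
  obtain ⟨C, hC𝒮, hmax⟩ := Finset.exists_maximal ⟨_, hv𝒮⟩
  simp only [𝒮, Finset.mem_filter, Finset.mem_univ, true_and] at hC𝒮 hmax
  obtain ⟨hvC, hCX, hCconn⟩ := hC𝒮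
  refine ⟨C, ⟨⟨v, hvC⟩, hCX, hCconn, fun a ha b hb hab => ?_⟩, hvC⟩
  have hconn : (G.induce (insert b C : Finset V)).Connected := by
    rw [Finset.coe_insert, Set.insert_eq, Set.union_comm]
    exact SimpleGraph.connected_induce_union hCconn.preconnected
      (by simp : (G.induce {b}).Connected).preconnected ha rfl hab
  exact hmax ⟨Finset.mem_insert_of_mem hvC, Finset.disjoint_insert_left.2 ⟨hb, hCX⟩, hconn⟩
    (Finset.subset_insert b C) (Finset.mem_insert_self b C)

namespace IsCompOf

variable {X C : Finset V}

lemma exists_superset [Fintype V] {X' Z : Finset V} (hZ : IsCompOf G X' Z) (hXX' : X ⊆ X') :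
    ∃ C, IsCompOf G X C ∧ Z ⊆ C := by
  obtain ⟨z, hz⟩ := hZ.nonempty
  have hZX : Disjoint Z X := hZ.disjoint.mono_right hXX'
  obtain ⟨C, hC, hzC⟩ := exists_isCompOf_mem G (Finset.disjoint_left.1 hZX hz)
  exact ⟨C, hC, hC.subset_of_connected hZX hZ.connected hz hzC⟩

lemma of_insert {R Z : Finset V} {v : V} (hC : IsCompOf G X C) (hvC : v ∉ C) (hXR : X ⊆ R)
    (hZ : IsCompOf G (insert v R) Z) (hZC : Z ⊆ C) : IsCompOf G R Z := by
  refine ⟨hZ.nonempty, hZ.disjoint.mono_right (Finset.subset_insert v R), hZ.connected,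
    fun a ha b hb hab => ?_⟩
  have hbv : b ≠ v := by
    rintro rfl
    exact hvC (hC.mem_of_adj (hZC ha) (fun hbX => hb (hXR hbX)) hab)
  exact hZ.mem_of_adj ha (by simp [hbv, hb]) hab

lemma of_insert_of_insert {R : Finset V} {u v : V} (huv : u ≠ v)
    (hu : IsCompOf G (insert u R) C) (hv : IsCompOf G (insert v R) C) : IsCompOf G R C := by
  refine ⟨hu.nonempty, hu.disjoint.mono_right (Finset.subset_insert u R), hu.connected,
    fun a ha b hb hab => ?_⟩
  have hbu : b ≠ u := by
    rintro rfl
    exact hu.notMem_of_mem (Finset.mem_insert_self b R)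
      (hv.mem_of_adj ha (by simp [huv, hb]) hab)
  exact hu.mem_of_adj ha (by simp [hbu, hb]) hab

end IsCompOf

noncomputable def compWeight (k : ℕ) : ℝ := if 2 ≤ k then 3 ^ (k - 2) else 0

lemma compWeight_nonneg (k : ℕ) : 0 ≤ compWeight k := by
  unfold compWeight; split_ifs <;> positivity

lemma two_mul_compWeight_le (k : ℕ) : 2 * compWeight k ≤ compWeight (k + 1) := by
  unfold compWeight
  split_ifs
  · rw [show k + 1 - 2 = k - 2 + 1 by omega, pow_succ]
    linarith [pow_nonneg (show (0 : ℝ) ≤ 3 by norm_num) (k - 2)]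
  · omega
  · rw [mul_zero]; positivity
  · simp

lemma compWeight_mono : Monotone compWeight :=
  monotone_nat_of_le_succ fun k => by
    linarith [two_mul_compWeight_le k, compWeight_nonneg k]

lemma compWeight_add_le {a b c : ℕ} (ha : a < c) (hb : b < c) :
    compWeight a + compWeight b ≤ compWeight c := by
  obtain ⟨c, rfl⟩ : ∃ c', c = c' + 1 := ⟨c - 1, by omega⟩
  linarith [compWeight_mono (Nat.le_of_lt_succ ha), compWeight_mono (Nat.le_of_lt_succ hb),
    two_mul_compWeight_le c]

noncomputable def familyWeight (𝒞 : Finset (Finset V)) : ℝ := ∑ C ∈ 𝒞, compWeight C.card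

@[simp] lemma familyWeight_singleton (C : Finset V) : familyWeight {C} = compWeight C.card :=
  Finset.sum_singleton _ _

lemma familyWeight_eq_add_erase {𝒞 : Finset (Finset V)} {C : Finset V} (hC : C ∈ 𝒞) :
    familyWeight 𝒞 = compWeight C.card + familyWeight (𝒞.erase C) :=
  (Finset.add_sum_erase 𝒞 _ hC).symm

lemma familyWeight_union {𝒞 𝒟 : Finset (Finset V)} (h : Disjoint 𝒞 𝒟) :
    familyWeight (𝒞 ∪ 𝒟) = familyWeight 𝒞 + familyWeight 𝒟 :=
  Finset.sum_union h

lemma familyWeight_mono {𝒞 𝒟 : Finset (Finset V)} (h : 𝒞 ⊆ 𝒟) :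
    familyWeight 𝒞 ≤ familyWeight 𝒟 :=
  Finset.sum_le_sum_of_subset_of_nonneg h fun _ _ _ => compWeight_nonneg _

section Components

variable [Fintype V] {X R C : Finset V}

noncomputable def comps (G : SimpleGraph V) (X : Finset V) : Finset (Finset V) :=
  Finset.univ.filter (IsCompOf G X)

noncomputable def compsIn (G : SimpleGraph V) (R C : Finset V) : Finset (Finset V) :=
  (comps G R).filter (· ⊆ C)

@[simp] lemma mem_comps {D : Finset V} : D ∈ comps G X ↔ IsCompOf G X D := by
  simp [comps]

@[simp] lemma mem_compsIn {D : Finset V} : D ∈ compsIn G R C ↔ IsCompOf G R D ∧ D ⊆ C := by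
  simp [compsIn]

lemma devf_eq_sub_familyWeight (G : SimpleGraph V) (X : Finset V) :
    devf G X = 3 ^ (Fintype.card V - 2) - familyWeight (comps G X) := by
  rw [devf, familyWeight, comps]
  unfold compWeight
  rw [← Finset.sum_filter, Finset.filter_filter]

lemma compsIn_eq_singleton (hC : IsCompOf G R C) : compsIn G R C = {C} := by
  ext D
  simp only [mem_compsIn, Finset.mem_singleton]
  refine ⟨fun ⟨hD, hDC⟩ => ?_, by rintro rfl; exact ⟨hC, subset_rfl⟩⟩
  obtain ⟨z, hz⟩ := hD.nonempty
  exact hD.eq_of_mem hC hz (hDC hz)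

lemma familyWeight_comps_eq_sum (hXR : X ⊆ R) :
    familyWeight (comps G R) = ∑ C ∈ comps G X, familyWeight (compsIn G R C) := by
  simp only [familyWeight, compsIn, Finset.sum_filter]
  rw [Finset.sum_comm]
  refine Finset.sum_congr rfl fun D hD => ?_
  rw [mem_comps] at hD
  obtain ⟨C, hC, hDC⟩ := hD.exists_superset hXR
  obtain ⟨z, hz⟩ := hD.nonempty
  rw [Finset.sum_eq_single_of_mem C (mem_comps.2 hC) fun C' hC' hne => if_neg fun hDC' =>
    hne ((mem_comps.1 hC').eq_of_mem hC (hDC' hz) (hDC hz)), if_pos hDC]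

lemma compsIn_insert (hC : IsCompOf G X C) {v : V} (hvC : v ∉ C) (hXR : X ⊆ R) :
    compsIn G (insert v R) C = compsIn G R C := by
  ext D
  simp only [mem_compsIn]
  exact ⟨fun ⟨hD, hDC⟩ => ⟨hC.of_insert hvC hXR hD hDC, hDC⟩,
    fun ⟨hD, hDC⟩ => ⟨hD.insert_of_notMem fun h => hvC (hDC h), hDC⟩⟩

lemma disjoint_compsIn_insert (hC : IsCompOf G X C) {u v : V} (huv : u ≠ v) (huC : u ∈ C) :
    Disjoint (compsIn G (insert u X) C) (compsIn G (insert v X) C) := by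
  refine Finset.disjoint_left.2 fun D hDu hDv => ?_
  obtain ⟨hDu, -⟩ := mem_compsIn.1 hDu
  obtain ⟨hDv, hDC⟩ := mem_compsIn.1 hDv
  obtain ⟨z, hz⟩ := hDu.nonempty
  have hDC : D = C := (hDu.of_insert_of_insert huv hDv).eq_of_mem hC hz (hDC hz)
  exact hDu.notMem_of_mem (Finset.mem_insert_self u X) (hDC ▸ huC)

lemma familyWeight_compsIn_local_of_notMem (hC : IsCompOf G X C) (u : V) {v : V} (hvC : v ∉ C) :
    familyWeight (compsIn G (insert u X) C) + familyWeight (compsIn G (insert v X) C) =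
      familyWeight (compsIn G (insert u (insert v X)) C) + compWeight C.card := by
  rw [Finset.insert_comm, compsIn_insert hC hvC (Finset.subset_insert u X),
    compsIn_eq_singleton (hC.insert_of_notMem hvC), familyWeight_singleton]

lemma familyWeight_compsIn_local_of_mem (hC : IsCompOf G X C) {u v : V} (huv : u ≠ v)
    (huC : u ∈ C) (hvC : v ∈ C) :
    familyWeight (compsIn G (insert u X) C) + familyWeight (compsIn G (insert v X) C) ≤
      familyWeight (compsIn G (insert u (insert v X)) C) + compWeight C.card := by
  obtain ⟨U, hU, hvU⟩ := exists_isCompOf_mem G (X := insert u X) (v := v)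
    (by simp [huv.symm, Finset.disjoint_left.1 hC.disjoint hvC])
  obtain ⟨W, hW, huW⟩ := exists_isCompOf_mem G (X := insert v X) (v := u)
    (by simp [huv, Finset.disjoint_left.1 hC.disjoint huC])
  have hUC : U ⊆ C := hC.subset_of_connected
    (hU.disjoint.mono_right (Finset.subset_insert u X)) hU.connected hvU hvC
  have hWC : W ⊆ C := hC.subset_of_connected
    (hW.disjoint.mono_right (Finset.subset_insert v X)) hW.connected huW huC
  have hUW : compWeight U.card + compWeight W.card ≤ compWeight C.card := by
    refine compWeight_add_le (Finset.card_lt_card ((Finset.ssubset_iff_of_subset hUC).2 ?_))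
      (Finset.card_lt_card ((Finset.ssubset_iff_of_subset hWC).2 ?_))
    · exact ⟨u, huC, hU.notMem_of_mem (Finset.mem_insert_self u X)⟩
    · exact ⟨v, hvC, hW.notMem_of_mem (Finset.mem_insert_self v X)⟩
  have hrestU : (compsIn G (insert u X) C).erase U ⊆ compsIn G (insert u (insert v X)) C := by
    intro D hD
    obtain ⟨hDU, hD⟩ := Finset.mem_erase.1 hD
    obtain ⟨hD, hDC⟩ := mem_compsIn.1 hD
    rw [Finset.insert_comm]
    exact mem_compsIn.2 ⟨hD.insert_of_notMem fun h => hDU (hD.eq_of_mem hU h hvU), hDC⟩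
  have hrestW : (compsIn G (insert v X) C).erase W ⊆ compsIn G (insert u (insert v X)) C := by
    intro D hD
    obtain ⟨hDW, hD⟩ := Finset.mem_erase.1 hD
    obtain ⟨hD, hDC⟩ := mem_compsIn.1 hD
    exact mem_compsIn.2 ⟨hD.insert_of_notMem fun h => hDW (hD.eq_of_mem hW h huW), hDC⟩
  have hrest := familyWeight_mono (Finset.union_subset hrestU hrestW)
  rw [familyWeight_union ((disjoint_compsIn_insert hC huv huC).mono
    (Finset.erase_subset _ _) (Finset.erase_subset _ _))] at hrest
  rw [familyWeight_eq_add_erase (mem_compsIn.2 ⟨hU, hUC⟩),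
    familyWeight_eq_add_erase (mem_compsIn.2 ⟨hW, hWC⟩)]
  linarith

lemma familyWeight_comps_local (G : SimpleGraph V) (X : Finset V) {u v : V} (huv : u ≠ v) :
    familyWeight (comps G (insert u X)) + familyWeight (comps G (insert v X)) ≤
      familyWeight (comps G (insert u (insert v X))) + familyWeight (comps G X) := by
  rw [familyWeight_comps_eq_sum (Finset.subset_insert u X),
    familyWeight_comps_eq_sum (Finset.subset_insert v X),
    familyWeight_comps_eq_sum ((Finset.subset_insert v X).trans (Finset.subset_insert u _)),
    show familyWeight (comps G X) = ∑ C ∈ comps G X, compWeight C.card from rfl,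
    ← Finset.sum_add_distrib, ← Finset.sum_add_distrib]
  refine Finset.sum_le_sum fun C hC => ?_
  rw [mem_comps] at hC
  by_cases hvC : v ∈ C
  · by_cases huC : u ∈ C
    · exact familyWeight_compsIn_local_of_mem hC huv huC hvC
    · have h := familyWeight_compsIn_local_of_notMem hC v huC
      rw [Finset.insert_comm] at h
      linarith
  · exact (familyWeight_compsIn_local_of_notMem hC u hvC).le

end Components

end

theorem stmt_5_general {V : Type*} [Fintype V] (G : SimpleGraph V) (X Y : Finset V) :
    devf G (X ∪ Y) + devf G (X ∩ Y) ≤ devf G X + devf G Y := by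
  have h := Finset.supermodular_of_insert (f := fun X => familyWeight (comps G X))
    (fun X _ _ huv _ _ => familyWeight_comps_local G X huv) X Y
  simp only [devf_eq_sub_familyWeight]
  linarith

theorem stmt_5 {V : Type*} [Fintype V] (G : SimpleGraph V) (hG : G.Connected)
    (hn : 2 ≤ Fintype.card V) (X Y : Finset V) :
    devf G (X ∪ Y) + devf G (X ∩ Y) ≤ devf G X + devf G Y :=
  stmt_5_general G X Y
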